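/- arXiv:1411.2166 — 2 statements merged into one kernel-verified Lean document; each statement's English description precedes it below -/
import Mathlib

section
/- Let T_0, T_1, ..., T_k be independent random variables with T_i exponentially distributed with rate m + i, where m ≥ 1 is an integer. Then for every λ > 0 and s > 0, P(∑_{i=0}^k T_i ≤ s) ≤ exp(λ(s − ln((m + k + 1 + λ)/(m + 1 + λ)))). -/
open MeasureTheory ProbabilityTheory Real

/-!
Markov's inequality applied to `exp (-λ ∑ Tᵢ)` bounds the probability by
`exp (λ s) ∏ rᵢ / (rᵢ + λ)`, since `r / (r + λ)` is the Laplace transform of `Exp(r)` at `λ`.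
Writing `r / (r + λ) = 1 - λ / (r + λ) ≤ exp (-λ / (r + λ))` turns the product into
`exp (-λ ∑ 1 / (m + i + λ))`, and the harmonic-type sum dominates the logarithm because
`log (x + 1) - log x ≤ 1 / x` telescopes.
-/

namespace ProbabilityTheory

lemma lintegral_exp_mul_expMeasure {r t : ℝ} (hr : 0 ≤ r) (ht : t < r) :
    ∫⁻ x, ENNReal.ofReal (exp (t * x)) ∂expMeasure r = ENNReal.ofReal (r / (r - t)) := by
  have hdens : ∀ x, exponentialPDF r x * ENNReal.ofReal (exp (t * x))
      = (Set.Ici 0).indicator (fun x ↦ ENNReal.ofReal (r * exp ((t - r) * x))) x := by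
    intro x
    rcases lt_or_ge x 0 with hx | hx
    · simp [exponentialPDF_of_neg hx, hx]
    · rw [Set.indicator_of_mem (Set.mem_Ici.2 hx), exponentialPDF_of_nonneg hx,
        ← ENNReal.ofReal_mul' (exp_pos _).le, mul_assoc, ← exp_add]
      ring_nf
  have hint : IntegrableOn (fun x ↦ r * exp ((t - r) * x)) (Set.Ici 0) := by
    rw [integrableOn_Ici_iff_integrableOn_Ioi]
    exact (integrableOn_exp_mul_Ioi (by linarith) 0).const_mul r
  change ∫⁻ x, _ ∂volume.withDensity (exponentialPDF r) = _
  rw [lintegral_withDensity_eq_lintegral_mul _ (f := exponentialPDF r)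
      (measurable_exponentialPDFReal r).ennreal_ofReal (by fun_prop)]
  simp only [Pi.mul_apply, hdens]
  rw [lintegral_indicator measurableSet_Ici, ← ofReal_integral_eq_lintegral_ofReal hint
      (ae_of_all _ fun x ↦ ?_), integral_Ici_eq_integral_Ioi, integral_const_mul,
      integral_exp_mul_Ioi (by linarith)]
  · rw [mul_zero, exp_zero, neg_div, ← div_neg, neg_sub, mul_one_div]
  · positivity

lemma mgf_id_expMeasure {r t : ℝ} (hr : 0 ≤ r) (ht : t < r) :
    mgf id (expMeasure r) t = r / (r - t) := by
  simp only [mgf, id_eq]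
  rw [integral_eq_lintegral_of_nonneg_ae (ae_of_all _ fun x ↦ (exp_pos _).le)
    (by fun_prop), lintegral_exp_mul_expMeasure hr ht,
    ENNReal.toReal_ofReal (div_nonneg hr (sub_pos.2 ht).le)]

theorem measureReal_sum_le_le_exp_mul_prod {Ω ι : Type*} [MeasurableSpace Ω] {μ : Measure Ω}
    [IsProbabilityMeasure μ] [Fintype ι] {T : ι → Ω → ℝ} {r : ι → ℝ}
    (hmeas : ∀ i, Measurable (T i)) (hindep : iIndepFun T μ) (hr : ∀ i, 0 < r i)
    (hlaw : ∀ i, μ.map (T i) = expMeasure (r i)) {lam : ℝ} (hlam : 0 < lam) (s : ℝ) :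
    μ.real {ω | ∑ i, T i ω ≤ s} ≤ exp (lam * s) * ∏ i, r i / (r i + lam) := by
  have hmgf (i : ι) : mgf (T i) μ (-lam) = r i / (r i + lam) := by
    rw [← mgf_id_map (hmeas i).aemeasurable, hlaw i,
      mgf_id_expMeasure (hr i).le (by linarith [hr i]), sub_neg_eq_add]
  have hint (i : ι) : Integrable (fun ω ↦ exp (-lam * T i ω)) μ := by
    refine mgf_pos_iff.1 ?_
    rw [hmgf i]
    exact div_pos (hr i) (by linarith [hr i])
  have hchernoff := measure_le_le_exp_mul_mgf s (neg_nonpos.2 hlam.le)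
    (hindep.integrable_exp_mul_sum hmeas (s := Finset.univ) fun i _ ↦ hint i)
  rw [hindep.mgf_sum hmeas, neg_neg] at hchernoff
  simpa only [Finset.sum_apply, hmgf] using hchernoff

end ProbabilityTheory

lemma div_add_le_exp_neg_div {r lam : ℝ} (h : r + lam ≠ 0) :
    r / (r + lam) ≤ exp (-(lam / (r + lam))) := by
  have : r / (r + lam) = 1 - lam / (r + lam) := by field_simp; ring
  rw [this]
  exact one_sub_le_exp_neg _

lemma Finset.prod_div_add_le_exp_neg_mul_sum {ι : Type*} (s : Finset ι) {r : ι → ℝ}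
    (hr : ∀ i ∈ s, 0 ≤ r i) {lam : ℝ} (hlam : 0 < lam) :
    ∏ i ∈ s, r i / (r i + lam) ≤ exp (-(lam * ∑ i ∈ s, (r i + lam)⁻¹)) := by
  have hpos (i) (hi : i ∈ s) : 0 < r i + lam := by linarith [hr i hi]
  calc ∏ i ∈ s, r i / (r i + lam) ≤ ∏ i ∈ s, exp (-(lam / (r i + lam))) :=
        Finset.prod_le_prod (fun i hi ↦ div_nonneg (hr i hi) (hpos i hi).le)
          fun i hi ↦ div_add_le_exp_neg_div (hpos i hi).ne'
    _ = exp (-(lam * ∑ i ∈ s, (r i + lam)⁻¹)) := by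
        rw [← exp_sum, Finset.sum_neg_distrib, Finset.mul_sum]
        simp only [div_eq_mul_inv]

lemma Real.log_add_div_le_sum_inv {a : ℝ} (ha : 0 < a) (n : ℕ) :
    log ((a + n) / a) ≤ ∑ i ∈ Finset.range n, (a + i)⁻¹ := by
  have hpos (i : ℕ) : 0 < a + i := by positivity
  have hstep (i : ℕ) : log (a + (i + 1 : ℕ)) - log (a + i) ≤ (a + i)⁻¹ := by
    rw [← log_div (hpos _).ne' (hpos i).ne']
    refine (log_le_sub_one_of_pos (div_pos (hpos _) (hpos i))).trans_eq ?_
    field_simp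
    push_cast
    ring
  calc log ((a + n) / a) = ∑ i ∈ Finset.range n, (log (a + (i + 1 : ℕ)) - log (a + i)) := by
        rw [Finset.sum_range_sub (fun i : ℕ ↦ log (a + i)), log_div (hpos n).ne' ha.ne']
        simp
    _ ≤ _ := Finset.sum_le_sum fun i _ ↦ hstep i

theorem stmt_2_general {Ω : Type*} [MeasurableSpace Ω] (μ : Measure Ω) [IsProbabilityMeasure μ]
    (m k : ℕ) (hm : 1 ≤ m) (T : Fin (k + 1) → Ω → ℝ)
    (hmeas : ∀ i, Measurable (T i))
    (hindep : iIndepFun T μ)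
    (hlaw : ∀ i : Fin (k + 1), μ.map (T i) = expMeasure ((m : ℝ) + i))
    (lam s : ℝ) (hlam : 0 < lam) :
    (μ {ω | ∑ i, T i ω ≤ s}).toReal
      ≤ exp (lam * (s - log (((m : ℝ) + k + 1 + lam) / ((m : ℝ) + 1 + lam)))) := by
  have hm' : (1 : ℝ) ≤ m := by exact_mod_cast hm
  have hrate (i : Fin (k + 1)) : 0 < (m : ℝ) + i := by positivity
  have hlog : log (((m : ℝ) + k + 1 + lam) / ((m : ℝ) + 1 + lam))
      ≤ ∑ i : Fin (k + 1), ((m : ℝ) + i + lam)⁻¹ :=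
    calc log (((m : ℝ) + k + 1 + lam) / ((m : ℝ) + 1 + lam))
        ≤ log (((m : ℝ) + lam + (k + 1 : ℕ)) / ((m : ℝ) + lam)) := by
          refine log_le_log (by positivity) ?_
          rw [div_le_div_iff₀ (by positivity) (by positivity)]
          push_cast
          nlinarith
      _ ≤ ∑ i ∈ Finset.range (k + 1), ((m : ℝ) + lam + i)⁻¹ :=
          log_add_div_le_sum_inv (by positivity) _
      _ = ∑ i : Fin (k + 1), ((m : ℝ) + i + lam)⁻¹ := by
          rw [Fin.sum_univ_eq_sum_range (fun i ↦ ((m : ℝ) + i + lam)⁻¹)]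
          simp only [add_right_comm]
  calc (μ {ω | ∑ i, T i ω ≤ s}).toReal
      ≤ exp (lam * s) * ∏ i : Fin (k + 1), ((m : ℝ) + i) / ((m : ℝ) + i + lam) :=
        measureReal_sum_le_le_exp_mul_prod hmeas hindep hrate hlaw hlam s
    _ ≤ exp (lam * s) * exp (-(lam * ∑ i : Fin (k + 1), ((m : ℝ) + i + lam)⁻¹)) := by
        gcongr
        exact Finset.univ.prod_div_add_le_exp_neg_mul_sum (fun i _ ↦ (hrate i).le) hlam
    _ ≤ _ := by
        rw [← exp_add]
        gcongr
        linarith [mul_le_mul_of_nonneg_left hlog hlam.le]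

/-- Chernoff-type bound for the sum of independent exponentials with rates m, m+1, ..., m+k. -/
theorem stmt_2 {Ω : Type*} [MeasurableSpace Ω] (μ : Measure Ω) [IsProbabilityMeasure μ]
    (m k : ℕ) (hm : 1 ≤ m) (T : Fin (k + 1) → Ω → ℝ)
    (hmeas : ∀ i, Measurable (T i))
    (hindep : iIndepFun T μ)
    (hlaw : ∀ i : Fin (k + 1), μ.map (T i) = expMeasure ((m : ℝ) + i))
    (lam s : ℝ) (hlam : 0 < lam) (hs : 0 < s) :
    (μ {ω | ∑ i, T i ω ≤ s}).toReal
      ≤ exp (lam * (s - log (((m : ℝ) + k + 1 + lam) / ((m : ℝ) + 1 + lam)))) :=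
  stmt_2_general μ m k hm T hmeas hindep hlaw lam s hlam
end

section
/- Let θ : [0,∞) → ℝ and σ : [0,∞) → ℝ be continuous with θ(t) → θ_∞ > 0 and σ(t)^2 → σ_∞^2 as t → ∞. Then lim_{t→∞} [∫_0^t σ(u)^2 exp(2∫_0^u θ(v)dv) du] / exp(2∫_0^t θ(u)du) = σ_∞^2 / (2θ_∞). -/
open Filter Real intervalIntegral

/-!
With `Θ t = ∫₀ᵗ θ`, the quotient is `F / G` for `F' = σ² e^{2Θ}` and `G' = 2θ e^{2Θ}`, so it is
an `∞/∞` instance of L'Hôpital's rule with `F' / G' = σ² / (2θ)`. The rule itself comes from the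
fencing theorem: once `|h'| ≤ ε g'` on `[T, ∞)`, `|h x - h T| ≤ ε (g x - g T)`, and applied to
`h = F - L G` this makes `F - L G = o(G)` because `G → ∞`.
-/

open Asymptotics Topology

theorem isLittleO_atTop_of_hasDerivAt {E : Type*} [NormedAddCommGroup E] [NormedSpace ℝ E]
    {f f' : ℝ → E} {g g' : ℝ → ℝ}
    (hf : ∀ᶠ x in atTop, HasDerivAt f (f' x) x) (hg : ∀ᶠ x in atTop, HasDerivAt g (g' x) x)
    (hg' : ∀ᶠ x in atTop, 0 ≤ g' x) (hg_top : Tendsto g atTop atTop)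
    (hfg : f' =o[atTop] g') : f =o[atTop] g := by
  refine IsLittleO.of_bound fun c hc => ?_
  obtain ⟨T, hT⟩ := eventually_atTop.1 (hf.and (hg.and (hg'.and (hfg.bound (half_pos hc)))))
  have hfence : ∀ x ≥ T, ‖f x - f T‖ ≤ c / 2 * (g x - g T) := by
    intro x hx
    refine image_norm_le_of_norm_deriv_right_le_deriv_boundary' (f := fun y => f y - f T) (f' := f')
      (B := fun y => c / 2 * (g y - g T)) (B' := fun y => c / 2 * g' y)
      ?_ ?_ (by simp) ?_ ?_ ?_ ⟨hx, le_rfl⟩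
    · exact fun y hy => ((hT y hy.1).1.sub_const (f T)).continuousAt.continuousWithinAt
    · exact fun y hy => ((hT y hy.1).1.sub_const (f T)).hasDerivWithinAt
    · exact fun y hy =>
        (((hT y hy.1).2.1.sub_const (g T)).const_mul _).continuousAt.continuousWithinAt
    · exact fun y hy => (((hT y hy.1).2.1.sub_const (g T)).const_mul _).hasDerivWithinAt
    · intro y hy
      simpa [abs_of_nonneg (hT y hy.1).2.2.1] using (hT y hy.1).2.2.2
  filter_upwards [eventually_ge_atTop T, hg_top.eventually_ge_atTop (max (2 * ‖f T‖ / c - g T) 0)]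
    with x hxT hgx
  have hK := (le_max_left _ _).trans hgx
  rw [Real.norm_of_nonneg ((le_max_right _ _).trans hgx)]
  have : ‖f T‖ ≤ c / 2 * (g x + g T) := by
    rw [div_sub' hc.ne', div_le_iff₀ hc] at hK
    linarith
  calc ‖f x‖ ≤ ‖f x - f T‖ + ‖f T‖ := norm_le_norm_sub_add _ _
    _ ≤ c * g x := by linarith [hfence x hxT]

theorem lhopital_atTop_of_tendsto_atTop {f f' g g' : ℝ → ℝ} {L : ℝ}
    (hf : ∀ᶠ x in atTop, HasDerivAt f (f' x) x) (hg : ∀ᶠ x in atTop, HasDerivAt g (g' x) x)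
    (hg' : ∀ᶠ x in atTop, 0 < g' x) (hg_top : Tendsto g atTop atTop)
    (hdiv : Tendsto (fun x => f' x / g' x) atTop (𝓝 L)) :
    Tendsto (fun x => f x / g x) atTop (𝓝 L) := by
  have hderiv : (fun x => f' x - L * g' x) =o[atTop] g' := by
    rw [isLittleO_iff_tendsto' (hg'.mono fun x hx h0 => absurd h0 hx.ne')]
    refine (tendsto_sub_nhds_zero_iff.2 hdiv).congr' (hg'.mono fun x hx => ?_)
    dsimp only
    rw [sub_div, mul_div_cancel_right₀ _ hx.ne']
  have hsub : (fun x => f x - L * g x) =o[atTop] g :=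
    isLittleO_atTop_of_hasDerivAt ((hf.and hg).mono fun x hx => hx.1.sub (hx.2.const_mul L)) hg
      (hg'.mono fun _ hx => hx.le) hg_top hderiv
  refine tendsto_sub_nhds_zero_iff.1 (hsub.tendsto_div_nhds_zero.congr' ?_)
  filter_upwards [hg_top.eventually_gt_atTop 0] with x hx
  rw [sub_div, mul_div_cancel_right₀ _ hx.ne']

theorem tendsto_atTop_of_hasDerivAt_of_tendsto_pos {f f' : ℝ → ℝ} {a : ℝ} (ha : 0 < a)
    (hf : ∀ᶠ x in atTop, HasDerivAt f (f' x) x) (hf' : Tendsto f' atTop (𝓝 a)) :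
    Tendsto f atTop atTop := by
  have hslope : Tendsto (fun x => f x / x) atTop (𝓝 a) :=
    lhopital_atTop_of_tendsto_atTop hf (.of_forall fun x => hasDerivAt_id x)
      (.of_forall fun _ => one_pos) tendsto_id (by simpa using hf')
  refine (hslope.pos_mul_atTop ha tendsto_id).congr' ?_
  filter_upwards [eventually_gt_atTop 0] with x hx
  exact div_mul_cancel₀ _ hx.ne'

/-- L'Hôpital-type limit: if `θ(t) → θ∞ > 0` and `σ(t)² → σ∞²`, then
`(∫₀ᵗ σ(u)² e^{2∫₀ᵘ θ} du) / e^{2∫₀ᵗ θ} → σ∞²/(2θ∞)`. -/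
theorem stmt_10 (θ σ : ℝ → ℝ) (θinf σinf : ℝ)
    (hθc : Continuous θ) (hσc : Continuous σ)
    (hθ : Tendsto θ atTop (nhds θinf)) (hθpos : 0 < θinf)
    (hσ : Tendsto (fun t => (σ t) ^ 2) atTop (nhds (σinf ^ 2))) :
    Tendsto (fun t =>
        (∫ u in (0 : ℝ)..t, (σ u) ^ 2 * exp (2 * ∫ v in (0 : ℝ)..u, θ v))
          / exp (2 * ∫ u in (0 : ℝ)..t, θ u))
      atTop (nhds (σinf ^ 2 / (2 * θinf))) := by
  set Θ : ℝ → ℝ := fun t => ∫ v in (0 : ℝ)..t, θ v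
  have hΘ : ∀ t, HasDerivAt Θ (θ t) t := fun t => (hθc.integral_hasStrictDerivAt 0 t).hasDerivAt
  have hΘc : Continuous Θ := continuous_iff_continuousAt.2 fun t => (hΘ t).continuousAt
  have hF : ∀ t, HasDerivAt (fun t => ∫ u in (0 : ℝ)..t, σ u ^ 2 * exp (2 * Θ u))
      (σ t ^ 2 * exp (2 * Θ t)) t := fun t =>
    (((hσc.pow 2).mul (continuous_exp.comp (continuous_const.mul hΘc))).integral_hasStrictDerivAt
      0 t).hasDerivAt
  have hG : ∀ t, HasDerivAt (fun t => exp (2 * Θ t)) (exp (2 * Θ t) * (2 * θ t)) t := fun t =>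
    ((hΘ t).const_mul 2).exp
  have hΘ_top : Tendsto Θ atTop atTop :=
    tendsto_atTop_of_hasDerivAt_of_tendsto_pos hθpos (.of_forall hΘ) hθ
  refine lhopital_atTop_of_tendsto_atTop (.of_forall hF) (.of_forall hG) ?_
    (tendsto_exp_atTop.comp (hΘ_top.const_mul_atTop two_pos)) ?_
  · filter_upwards [hθ.eventually (lt_mem_nhds hθpos)] with t ht
    positivity
  · refine (hσ.div (hθ.const_mul 2) (by positivity)).congr fun t => ?_
    simp only [Pi.div_apply]
    rw [mul_comm (σ t ^ 2), mul_div_mul_left _ _ (exp_pos _).ne']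
end
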